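/- g₀ is strictly subadditive on (0,∞): for every s₁ > 0 and s₂ > 0 one has g₀(s₁ + s₂) < g₀(s₁) + g₀(s₂). -/

import Mathlib

open MeasureTheory Set Filter

/-- Hypotheses on the function `f₁` from Section 6.1 of the paper. -/
structure F1Hyp (ℓ ℓ₁ : ℝ) (f₁ : ℝ → ℝ) : Prop where
  hl : 0 < ℓ
  hl1 : 0 < ℓ₁
  cont : ContinuousOn f₁ (Icc 0 1)
  diff : ∃ d : ℝ → ℝ, ContinuousOn d (Ioc 0 1) ∧
    ∀ t ∈ Ioc (0:ℝ) 1, HasDerivWithinAt f₁ (d t) (Ioc 0 1) t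
  anti : StrictAntiOn f₁ (Icc 0 1)
  nonneg : ∀ t ∈ Icc (0:ℝ) 1, 0 ≤ f₁ t
  f10 : f₁ 0 = ℓ
  f11 : f₁ 1 = 0
  convexSqrt : ConvexOn ℝ (Icc 0 1) (fun u => f₁ (Real.sqrt u))
  lim0 : Tendsto (fun s => (f₁ s - ℓ + ℓ₁ * s) / s) (nhdsWithin 0 (Ioi 0)) (nhds 0)

/-- `γ` is admissible, with a.e. derivative `γ'` (absolute continuity is encoded by the
fundamental theorem of calculus representation with an `L¹` derivative). -/
def Admissible (γ γ' : ℝ → ℝ) : Prop :=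
  IntegrableOn γ' (Icc 0 1) ∧
  (∀ t ∈ Icc (0:ℝ) 1, γ t = ∫ u in (0:ℝ)..t, γ' u) ∧
  (∀ t ∈ Icc (0:ℝ) 1, 0 ≤ γ t ∧ γ t ≤ 1) ∧
  γ 0 = 0 ∧ γ 1 = 0

/-- The energy in the characterization (6.11). -/
noncomputable def energy (f₁ : ℝ → ℝ) (s : ℝ) (γ γ' : ℝ → ℝ) : ℝ :=
  ∫ t in (0:ℝ)..1, Real.sqrt (s ^ 2 * (f₁ (Real.sqrt (γ t))) ^ 2 + (γ' t) ^ 2 / 4)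

/-- The cohesive energy density of pristine material, via characterization (6.11). -/
noncomputable def g0 (f₁ : ℝ → ℝ) (s : ℝ) : ℝ :=
  sInf {x | ∃ γ γ' : ℝ → ℝ, Admissible γ γ' ∧ x = energy f₁ s γ γ'}

/-! The map `s ↦ g₀(s) / s` is strictly decreasing on `(0,∞)`, and strict subadditivity follows at
once. For a fixed curve, `energy f₁ s γ γ' / s = ∫ √(f₁(√γ)² + γ'² / (4 s²))` decreases in `s`, by
an amount bounded below in terms of the total variation `∫ |γ'|`. That total variation is bounded
below uniformly over near minimizers, because `g₀(s) < ℓ s` while a curve of small total variation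
stays near `0`, where `f₁ (√γ) ≈ ℓ`, and so has energy close to `ℓ s`. -/

lemma sqrt_sq_mul_add_le {s a : ℝ} (hs : 0 ≤ s) (ha : 0 ≤ a) (b : ℝ) :
    √(s ^ 2 * a ^ 2 + b ^ 2 / 4) ≤ s * a + |b| / 2 :=
  Real.sqrt_le_iff.2
    ⟨by positivity, by nlinarith [sq_abs b, mul_nonneg (mul_nonneg hs ha) (abs_nonneg b)]⟩

lemma mul_le_sqrt_sq_mul_add {s a : ℝ} (hs : 0 ≤ s) (ha : 0 ≤ a) (b : ℝ) :
    s * a ≤ √(s ^ 2 * a ^ 2 + b ^ 2 / 4) :=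
  (Real.le_sqrt (by positivity) (by positivity)).2 (by nlinarith [sq_nonneg b])

lemma sqrt_sq_mul_add_div {s : ℝ} (hs : 0 < s) (a b : ℝ) :
    √(s ^ 2 * a ^ 2 + b ^ 2 / 4) / s = √(a ^ 2 + (|b| / (2 * s)) ^ 2) := by
  rw [div_eq_iff hs.ne', ← Real.sqrt_sq hs.le, ← Real.sqrt_mul (by positivity), Real.sqrt_sq hs.le]
  congr 1
  field_simp
  rw [sq_abs]
  ring

/-- `k * (2 * x - k * (ℓ + x))` is a tangent line of the convex function `x ↦ x² / (ℓ + x)`, and the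
difference of square roots is at least `(1 - r²) x² / (2 (ℓ + x))`. -/
lemma le_sqrt_add_sq_sub_sqrt_add_sq {a ℓ x r : ℝ} (ha : a ∈ Icc 0 ℓ) (hx : 0 ≤ x)
    (hr : r ∈ Icc (0 : ℝ) 1) (k : ℝ) :
    (1 - r ^ 2) / 2 * (k * (2 * x - k * (ℓ + x))) ≤ √(a ^ 2 + x ^ 2) - √(a ^ 2 + (r * x) ^ 2) := by
  obtain ⟨ha0, haℓ⟩ := ha
  obtain ⟨hr0, hr1⟩ := hr
  set u := √(a ^ 2 + x ^ 2)
  set v := √(a ^ 2 + (r * x) ^ 2)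
  have hu2 : u ^ 2 = a ^ 2 + x ^ 2 := Real.sq_sqrt (by positivity)
  have hv2 : v ^ 2 = a ^ 2 + (r * x) ^ 2 := Real.sq_sqrt (by positivity)
  have hxu : x ≤ u := Real.le_sqrt_of_sq_le (by nlinarith)
  have hvu : v ≤ u := Real.sqrt_le_sqrt (by nlinarith [mul_le_of_le_one_left hr0 hr1])
  have hu : u ≤ ℓ + x := Real.sqrt_le_iff.2 ⟨by linarith, by nlinarith⟩
  have hc : 0 ≤ 1 - r ^ 2 := by nlinarith
  have htangent : k * (2 * x - k * (ℓ + x)) * (ℓ + x) ≤ x ^ 2 := by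
    nlinarith [sq_nonneg (x - k * (ℓ + x))]
  rcases le_or_gt (k * (2 * x - k * (ℓ + x))) 0 with hw | hw
  · nlinarith [mul_nonpos_of_nonneg_of_nonpos hc hw]
  · have hx : 0 < x := hx.lt_of_ne (by rintro rfl; nlinarith [sq_nonneg k])
    have hv : 0 ≤ v := Real.sqrt_nonneg _
    nlinarith [mul_le_mul_of_nonneg_left htangent hc, mul_nonneg hc hw.le,
      mul_le_mul_of_nonneg_left (show u + v ≤ 2 * (ℓ + x) by linarith) (mul_nonneg hc hw.le)]

lemma le_sqrt_div_sub_sqrt_div {s S a ℓ : ℝ} (hs : 0 < s) (hsS : s ≤ S) (ha : a ∈ Icc 0 ℓ)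
    (b k : ℝ) :
    (1 - (s / S) ^ 2) / 2 * (k * (2 - k) / (2 * s)) * |b| - (1 - (s / S) ^ 2) / 2 * (k ^ 2 * ℓ) ≤
      √(s ^ 2 * a ^ 2 + b ^ 2 / 4) / s - √(S ^ 2 * a ^ 2 + b ^ 2 / 4) / S := by
  have hS : 0 < S := hs.trans_le hsS
  have hscale : |b| / (2 * S) = s / S * (|b| / (2 * s)) := by field_simp
  rw [sqrt_sq_mul_add_div hs, sqrt_sq_mul_add_div hS, hscale]
  refine le_of_eq_of_le ?_ (le_sqrt_add_sq_sub_sqrt_add_sq ha (by positivity)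
    ⟨by positivity, (div_le_one hS).2 hsS⟩ k)
  field_simp
  ring

lemma Real.sqrt_mem_Icc_zero_one {u : ℝ} (hu : u ∈ Icc (0 : ℝ) 1) : √u ∈ Icc (0 : ℝ) 1 :=
  ⟨Real.sqrt_nonneg u, Real.sqrt_le_one.2 hu.2⟩

section

variable {ℓ ℓ₁ : ℝ} {f₁ : ℝ → ℝ} {γ γ' : ℝ → ℝ}

lemma F1Hyp.mem_Icc (hf : F1Hyp ℓ ℓ₁ f₁) {t : ℝ} (ht : t ∈ Icc (0 : ℝ) 1) : f₁ t ∈ Icc 0 ℓ :=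
  ⟨hf.nonneg t ht, hf.f10 ▸ hf.anti.antitoneOn ⟨le_rfl, zero_le_one⟩ ht ht.1⟩

lemma F1Hyp.exists_le_sub_mul (hf : F1Hyp ℓ ℓ₁ f₁) :
    ∃ σ₀ > 0, ∀ σ ∈ Icc 0 σ₀, f₁ σ ≤ ℓ - ℓ₁ / 2 * σ := by
  obtain ⟨σ₀, hσ₀, hsub⟩ := mem_nhdsGT_iff_exists_Ioc_subset.1
    (hf.lim0.eventually (gt_mem_nhds (half_pos hf.hl1)))
  refine ⟨σ₀, hσ₀, fun σ hσ => ?_⟩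
  rcases hσ.1.eq_or_lt with rfl | hσ0
  · simp [hf.f10]
  · have := (div_lt_iff₀ hσ0).1 (hsub ⟨hσ0, hσ.2⟩)
    linarith

lemma F1Hyp.exists_sub_lt (hf : F1Hyp ℓ ℓ₁ f₁) {η : ℝ} (hη : 0 < η) :
    ∃ m > 0, ∀ u ∈ Icc 0 m, ℓ - η < f₁ √u := by
  have hcont : ContinuousWithinAt (fun u => f₁ √u) (Icc 0 1) 0 :=
    (hf.cont.comp Real.continuous_sqrt.continuousOn
      fun _ hu => Real.sqrt_mem_Icc_zero_one hu) 0 ⟨le_rfl, zero_le_one⟩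
  have hlim := hcont.tendsto
  rw [nhdsWithin_Icc_eq_nhdsGE zero_lt_one, Real.sqrt_zero, hf.f10] at hlim
  exact mem_nhdsGE_iff_exists_Icc_subset.1 (hlim.eventually_const_lt (sub_lt_self ℓ hη))

lemma admissible_of_hasDerivAt (hγ : ∀ t, HasDerivAt γ (γ' t) t) (hγ' : Continuous γ')
    (h0 : γ 0 = 0) (h1 : γ 1 = 0) (hmem : ∀ t ∈ Icc (0 : ℝ) 1, γ t ∈ Icc 0 1) :
    Admissible γ γ' :=
  ⟨hγ'.integrableOn_Icc, fun t _ => by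
    rw [intervalIntegral.integral_eq_sub_of_hasDerivAt (fun x _ => hγ x)
      (hγ'.intervalIntegrable 0 t), h0, sub_zero], hmem, h0, h1⟩

lemma Admissible.continuousOn (hA : Admissible γ γ') : ContinuousOn γ (Icc 0 1) :=
  (intervalIntegral.continuousOn_primitive hA.1).congr fun t ht => by
    rw [hA.2.1 t ht, intervalIntegral.integral_of_le ht.1]

lemma Admissible.comp_mem_Icc (hA : Admissible γ γ') (hf : F1Hyp ℓ ℓ₁ f₁) {t : ℝ}
    (ht : t ∈ Icc (0 : ℝ) 1) : f₁ √(γ t) ∈ Icc 0 ℓ :=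
  hf.mem_Icc (Real.sqrt_mem_Icc_zero_one (hA.2.2.1 t ht))

/-- `γ` climbs from `0` to `γ t` and comes back down to `0`. -/
lemma Admissible.two_mul_le_integral_abs (hA : Admissible γ γ') {t : ℝ} (ht : t ∈ Icc (0 : ℝ) 1) :
    2 * γ t ≤ ∫ u in (0 : ℝ)..1, |γ' u| := by
  have hint : ∀ {a b}, 0 ≤ a → a ≤ b → b ≤ 1 → IntervalIntegrable γ' volume a b :=
    fun ha hab hb => (intervalIntegrable_iff_integrableOn_Icc_of_le hab).2
      (hA.1.mono_set (Icc_subset_Icc ha hb))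
  have hγt : γ t = ∫ u in (0 : ℝ)..t, γ' u := hA.2.1 t ht
  have hγt' : γ t = -∫ u in t..1, γ' u := by
    have := intervalIntegral.integral_add_adjacent_intervals (hint le_rfl ht.1 ht.2)
      (hint ht.1 ht.2 le_rfl)
    rw [← hA.2.1 1 ⟨zero_le_one, le_rfl⟩, hA.2.2.2.2] at this
    linarith
  rw [← intervalIntegral.integral_add_adjacent_intervals (hint le_rfl ht.1 ht.2).abs
    (hint ht.1 ht.2 le_rfl).abs, two_mul]
  gcongr
  · exact hγt ▸ (le_abs_self _).trans (intervalIntegral.abs_integral_le_integral_abs ht.1)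
  · exact hγt' ▸ (neg_le_abs _).trans (intervalIntegral.abs_integral_le_integral_abs ht.2)

lemma Admissible.intervalIntegrable_integrand (hA : Admissible γ γ') (hf : F1Hyp ℓ ℓ₁ f₁)
    {s : ℝ} (hs : 0 ≤ s) :
    IntervalIntegrable (fun t => √(s ^ 2 * f₁ √(γ t) ^ 2 + γ' t ^ 2 / 4)) volume 0 1 := by
  refine (intervalIntegrable_iff_integrableOn_Icc_of_le zero_le_one).2 ?_
  have ha : ContinuousOn (fun t => f₁ √(γ t)) (Icc 0 1) :=
    hf.cont.comp (Real.continuous_sqrt.comp_continuousOn hA.continuousOn)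
      fun t ht => Real.sqrt_mem_Icc_zero_one (hA.2.2.1 t ht)
  have hmeas : AEStronglyMeasurable (fun t => f₁ √(γ t)) (volume.restrict (Icc 0 1)) :=
    ha.aestronglyMeasurable measurableSet_Icc
  have hmeas' := hA.1.aestronglyMeasurable
  refine Integrable.mono' ((integrable_const (s * ℓ)).add (hA.1.abs.div_const 2))
    (Real.continuous_sqrt.comp_aestronglyMeasurable
      (((hmeas.pow 2).const_mul _).add ((hmeas'.pow 2).div₀ aestronglyMeasurable_const))) ?_
  filter_upwards [ae_restrict_mem measurableSet_Icc] with t ht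
  obtain ⟨h0, hℓ⟩ := hA.comp_mem_Icc hf ht
  rw [Real.norm_of_nonneg (Real.sqrt_nonneg _)]
  exact (sqrt_sq_mul_add_le hs h0 _).trans (by dsimp; gcongr)

lemma energy_nonneg (f₁ : ℝ → ℝ) (s : ℝ) (γ γ' : ℝ → ℝ) : 0 ≤ energy f₁ s γ γ' :=
  intervalIntegral.integral_nonneg zero_le_one fun _ _ => Real.sqrt_nonneg _

lemma g0_le_energy (hA : Admissible γ γ') (s : ℝ) : g0 f₁ s ≤ energy f₁ s γ γ' := by
  refine csInf_le ⟨0, ?_⟩ ⟨γ, γ', hA, rfl⟩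
  rintro _ ⟨γ, γ', -, rfl⟩
  exact energy_nonneg f₁ s γ γ'

lemma exists_energy_lt (f₁ : ℝ → ℝ) (s : ℝ) {ε : ℝ} (hε : 0 < ε) :
    ∃ γ γ', Admissible γ γ' ∧ energy f₁ s γ γ' < g0 f₁ s + ε := by
  have hzero : Admissible (fun _ => 0) (fun _ => 0) :=
    admissible_of_hasDerivAt (fun _ => hasDerivAt_const _ _) continuous_const rfl rfl
      fun _ _ => ⟨le_rfl, zero_le_one⟩
  obtain ⟨_, ⟨γ, γ', hA, rfl⟩, hlt⟩ := Real.lt_sInf_add_pos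
    (s := {x | ∃ γ γ', Admissible γ γ' ∧ x = energy f₁ s γ γ'}) ⟨_, _, _, hzero, rfl⟩ hε
  exact ⟨γ, γ', hA, hlt⟩

lemma integral_mul_one_sub : ∫ t in (0 : ℝ)..1, t * (1 - t) = 1 / 6 := by
  simp only [mul_sub, mul_one, ← pow_two]
  rw [intervalIntegral.integral_sub intervalIntegral.intervalIntegrable_id
    (Continuous.intervalIntegrable (by fun_prop) _ _)]
  norm_num

lemma mul_one_sub_mem_Icc {t : ℝ} (ht : t ∈ Icc (0 : ℝ) 1) : t * (1 - t) ∈ Icc 0 (1 / 4) :=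
  ⟨mul_nonneg ht.1 (by linarith [ht.2]), by nlinarith [sq_nonneg (2 * t - 1)]⟩

lemma admissible_bump {σ : ℝ} (hσ : 0 ≤ σ) (hσ1 : σ ≤ 1) :
    Admissible (fun t => σ ^ 2 * (t * (1 - t))) (fun t => σ ^ 2 * (1 - 2 * t)) :=
  admissible_of_hasDerivAt
    (fun t => (((hasDerivAt_id' t).mul ((hasDerivAt_id' t).const_sub 1)).const_mul
      (σ ^ 2)).congr_deriv (by ring))
    (by fun_prop) (by simp) (by simp) fun _ ht =>
      ⟨mul_nonneg (sq_nonneg σ) (mul_one_sub_mem_Icc ht).1, mul_le_one₀ (pow_le_one₀ hσ hσ1)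
        (mul_one_sub_mem_Icc ht).1 (by linarith [(mul_one_sub_mem_Icc ht).2])⟩

/-- For the bump `γ = σ² t (1 - t)`, `√γ ≥ 2 σ t (1 - t)` lowers `f₁ (√γ)` linearly in `σ`, while
the cost `|γ'| / 2 ≤ σ² / 2` is only quadratic. -/
lemma F1Hyp.integrand_bump_le (hf : F1Hyp ℓ ℓ₁ f₁) {σ₀ σ s t : ℝ}
    (hlin : ∀ σ ∈ Icc 0 σ₀, f₁ σ ≤ ℓ - ℓ₁ / 2 * σ) (hσ : 0 < σ) (hσσ₀ : σ ≤ σ₀) (hσ1 : σ ≤ 1)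
    (hs : 0 ≤ s) (ht : t ∈ Icc (0 : ℝ) 1) :
    √(s ^ 2 * f₁ √(σ ^ 2 * (t * (1 - t))) ^ 2 + (σ ^ 2 * (1 - 2 * t)) ^ 2 / 4) ≤
      s * ℓ + σ ^ 2 / 2 - s * ℓ₁ * σ * (t * (1 - t)) := by
  obtain ⟨hp0, hp⟩ := mul_one_sub_mem_Icc ht
  have hsqrt : √(σ ^ 2 * (t * (1 - t))) = σ * √(t * (1 - t)) := by
    rw [Real.sqrt_mul (sq_nonneg σ), Real.sqrt_sq hσ.le]
  have hlow : 2 * (t * (1 - t)) ≤ √(t * (1 - t)) := Real.le_sqrt_of_sq_le (by nlinarith)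
  have hup : √(t * (1 - t)) ≤ 1 / 2 := Real.sqrt_le_iff.2 ⟨by norm_num, by linarith⟩
  have hf₁ : f₁ √(σ ^ 2 * (t * (1 - t))) ≤ ℓ - ℓ₁ * σ * (t * (1 - t)) := by
    refine (hlin _ ⟨Real.sqrt_nonneg _, by rw [hsqrt]; nlinarith⟩).trans ?_
    rw [hsqrt]
    nlinarith [mul_le_mul_of_nonneg_left hlow (mul_nonneg hf.hl1.le hσ.le)]
  have hder : |σ ^ 2 * (1 - 2 * t)| ≤ σ ^ 2 := by
    rw [abs_mul, abs_of_nonneg (sq_nonneg σ)]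
    exact mul_le_of_le_one_right (sq_nonneg σ) (abs_le.2 ⟨by linarith [ht.2], by linarith [ht.1]⟩)
  refine (sqrt_sq_mul_add_le hs ((admissible_bump hσ.le hσ1).comp_mem_Icc hf ht).1 _).trans ?_
  nlinarith [mul_le_mul_of_nonneg_left hf₁ hs]

theorem g0_lt_mul (hf : F1Hyp ℓ ℓ₁ f₁) {s : ℝ} (hs : 0 < s) : g0 f₁ s < ℓ * s := by
  obtain ⟨σ₀, hσ₀, hlin⟩ := hf.exists_le_sub_mul
  have hℓ₁ := hf.hl1
  set σ := min (min σ₀ 1) (s * ℓ₁ / 6)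
  have hσ : 0 < σ := lt_min (lt_min hσ₀ one_pos) (by positivity)
  have hσσ₀ : σ ≤ σ₀ := (min_le_left _ _).trans (min_le_left _ _)
  have hσ1 : σ ≤ 1 := (min_le_left _ _).trans (min_le_right _ _)
  have hσs : σ ≤ s * ℓ₁ / 6 := min_le_right _ _
  have hint : ∫ t in (0 : ℝ)..1, (s * ℓ + σ ^ 2 / 2 - s * ℓ₁ * σ * (t * (1 - t))) =
      s * ℓ + σ ^ 2 / 2 - s * ℓ₁ * σ / 6 := by
    rw [intervalIntegral.integral_sub intervalIntegrable_const
      (Continuous.intervalIntegrable (by fun_prop) _ _), intervalIntegral.integral_const_mul,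
      integral_mul_one_sub]
    simp
    ring
  calc g0 f₁ s ≤ energy f₁ s _ _ := g0_le_energy (admissible_bump hσ.le hσ1) s
    _ ≤ s * ℓ + σ ^ 2 / 2 - s * ℓ₁ * σ / 6 :=
      hint ▸ intervalIntegral.integral_mono_on zero_le_one
        ((admissible_bump hσ.le hσ1).intervalIntegrable_integrand hf hs.le)
        (Continuous.intervalIntegrable (by fun_prop) _ _)
        fun t ht => hf.integrand_bump_le hlin hσ hσσ₀ hσ1 hs.le ht
    _ < ℓ * s := by nlinarith

lemma exists_le_integral_abs_of_energy_lt (hf : F1Hyp ℓ ℓ₁ f₁) {s : ℝ} (hs : 0 < s) :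
    ∃ m > 0, ∃ ε > 0, ∀ γ γ', Admissible γ γ' → energy f₁ s γ γ' < g0 f₁ s + ε →
      m ≤ ∫ t in (0 : ℝ)..1, |γ' t| := by
  set ε := (ℓ * s - g0 f₁ s) / 2 with hε_def
  have hε : 0 < ε := half_pos (sub_pos.2 (g0_lt_mul hf hs))
  obtain ⟨m, hm, hnear⟩ := hf.exists_sub_lt (div_pos hε hs)
  refine ⟨2 * m, by positivity, ε, hε, fun γ γ' hA hE => ?_⟩
  by_contra! hV
  have hbound : ∀ t ∈ Icc (0 : ℝ) 1, s * (ℓ - ε / s) ≤ √(s ^ 2 * f₁ √(γ t) ^ 2 + γ' t ^ 2 / 4) :=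
    fun t ht => (mul_le_mul_of_nonneg_left (hnear _ ⟨(hA.2.2.1 t ht).1,
      by linarith [hA.two_mul_le_integral_abs ht]⟩).le hs.le).trans
        (mul_le_sqrt_sq_mul_add hs.le (hA.comp_mem_Icc hf ht).1 _)
  have := intervalIntegral.integral_mono_on zero_le_one intervalIntegrable_const
    (hA.intervalIntegrable_integrand hf hs.le) hbound
  rw [intervalIntegral.integral_const, mul_sub, mul_div_cancel₀ _ hs.ne'] at this
  change _ ≤ energy f₁ s γ γ' at this
  simp only [sub_zero, one_smul] at this
  linarith [hε_def]

/-- The constant is the value at `x₀ = m / (2 s)` of `x ↦ x² / (ℓ + x)`, reached through the tangent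
line there (a Jensen inequality for the normalized total variation `∫ |γ'| / (2 s) ≥ x₀`). -/
lemma Admissible.energy_div_add_le (hA : Admissible γ γ') (hf : F1Hyp ℓ ℓ₁ f₁) {s S m : ℝ}
    (hs : 0 < s) (hsS : s ≤ S) (hm : 0 ≤ m) (hV : m ≤ ∫ t in (0 : ℝ)..1, |γ' t|) :
    energy f₁ S γ γ' / S + (1 - (s / S) ^ 2) / 2 * ((m / (2 * s)) ^ 2 / (ℓ + m / (2 * s))) ≤
      energy f₁ s γ γ' / s := by
  have hℓ := hf.hl
  have hS : 0 < S := hs.trans_le hsS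
  set x₀ := m / (2 * s)
  set k := x₀ / (ℓ + x₀)
  set c := (1 - (s / S) ^ 2) / 2
  have hc : 0 ≤ c :=
    div_nonneg (sub_nonneg.2 (pow_le_one₀ (by positivity) ((div_le_one hS).2 hsS))) zero_le_two
  have hx₀ : 0 ≤ x₀ := by positivity
  have hk : k ∈ Icc (0 : ℝ) 1 :=
    ⟨div_nonneg hx₀ (by linarith), (div_le_one (by linarith)).2 (by linarith)⟩
  have hpt : ∀ t ∈ Icc (0 : ℝ) 1,
      c * (k * (2 - k) / (2 * s)) * |γ' t| - c * (k ^ 2 * ℓ) ≤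
        √(s ^ 2 * f₁ √(γ t) ^ 2 + γ' t ^ 2 / 4) / s - √(S ^ 2 * f₁ √(γ t) ^ 2 + γ' t ^ 2 / 4) / S :=
    fun t ht => le_sqrt_div_sub_sqrt_div hs hsS (hA.comp_mem_Icc hf ht) _ k
  have hV_int : IntervalIntegrable (fun t => c * (k * (2 - k) / (2 * s)) * |γ' t|) volume 0 1 :=
    ((intervalIntegrable_iff_integrableOn_Icc_of_le zero_le_one).2 hA.1.abs).const_mul _
  have hs_int := (hA.intervalIntegrable_integrand hf hs.le).div_const s
  have hS_int := (hA.intervalIntegrable_integrand hf hS.le).div_const S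
  have hint := intervalIntegral.integral_mono_on zero_le_one
    (hV_int.sub intervalIntegrable_const) (hs_int.sub hS_int) hpt
  rw [intervalIntegral.integral_sub hV_int intervalIntegrable_const,
    intervalIntegral.integral_const_mul, intervalIntegral.integral_const,
    intervalIntegral.integral_sub hs_int hS_int, intervalIntegral.integral_div,
    intervalIntegral.integral_div] at hint
  change _ ≤ energy f₁ s γ γ' / s - energy f₁ S γ γ' / S at hint
  have htangent : k * (2 - k) / (2 * s) * m - k ^ 2 * ℓ = x₀ ^ 2 / (ℓ + x₀) := by
    simp only [k, x₀]
    field_simp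
    ring
  have hcoef : 0 ≤ c * (k * (2 - k) / (2 * s)) :=
    mul_nonneg hc (div_nonneg (mul_nonneg hk.1 (by linarith [hk.2])) (by positivity))
  have hmono := mul_le_mul_of_nonneg_left hV hcoef
  simp only [sub_zero, one_smul] at hint
  rw [← htangent, mul_sub, ← mul_assoc]
  linarith

theorem strictAntiOn_g0_div (hf : F1Hyp ℓ ℓ₁ f₁) : StrictAntiOn (fun s => g0 f₁ s / s) (Ioi 0) := by
  intro s (hs : 0 < s) S (hS : 0 < S) hsS
  obtain ⟨m, hm, ε₀, hε₀, hmove⟩ := exists_le_integral_abs_of_energy_lt hf hs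
  set κ := (1 - (s / S) ^ 2) / 2 * ((m / (2 * s)) ^ 2 / (ℓ + m / (2 * s))) with hκ_def
  have hκ : 0 < κ := by
    have hr : s / S < 1 := (div_lt_one hS).2 hsS
    exact mul_pos (half_pos (sub_pos.2 (pow_lt_one₀ (by positivity) hr two_ne_zero)))
      (div_pos (by positivity) (add_pos hf.hl (by positivity)))
  obtain ⟨γ, γ', hA, hE⟩ := exists_energy_lt f₁ s (lt_min hε₀ (mul_pos hs hκ))
  have hgap := hA.energy_div_add_le hf hs hsS.le hm.le
    (hmove γ γ' hA (hE.trans_le (by gcongr; exact min_le_left _ _)))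
  rw [← hκ_def] at hgap
  have hE' : energy f₁ s γ γ' < g0 f₁ s + s * κ := hE.trans_le (by gcongr; exact min_le_right _ _)
  calc g0 f₁ S / S ≤ energy f₁ S γ γ' / S := div_le_div_of_nonneg_right (g0_le_energy hA S) hS.le
    _ ≤ energy f₁ s γ γ' / s - κ := by linarith
    _ < (g0 f₁ s + s * κ) / s - κ := by gcongr
    _ = g0 f₁ s / s := by rw [add_div, mul_div_cancel_left₀ _ hs.ne']; ring

end

/-- `g₀` is strictly subadditive on `(0,∞)`. -/
theorem stmt_3 (ℓ ℓ₁ : ℝ) (f₁ : ℝ → ℝ) (hf : F1Hyp ℓ ℓ₁ f₁)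
    (s₁ s₂ : ℝ) (h₁ : 0 < s₁) (h₂ : 0 < s₂) :
    g0 f₁ (s₁ + s₂) < g0 f₁ s₁ + g0 f₁ s₂ := by
  have hS : 0 < s₁ + s₂ := add_pos h₁ h₂
  have hlt₁ : g0 f₁ (s₁ + s₂) / (s₁ + s₂) < g0 f₁ s₁ / s₁ :=
    strictAntiOn_g0_div hf h₁ hS (lt_add_of_pos_right s₁ h₂)
  have hlt₂ : g0 f₁ (s₁ + s₂) / (s₁ + s₂) < g0 f₁ s₂ / s₂ :=
    strictAntiOn_g0_div hf h₂ hS (lt_add_of_pos_left s₂ h₁)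
  calc g0 f₁ (s₁ + s₂)
      = s₁ * (g0 f₁ (s₁ + s₂) / (s₁ + s₂)) + s₂ * (g0 f₁ (s₁ + s₂) / (s₁ + s₂)) := by
        field_simp
    _ < s₁ * (g0 f₁ s₁ / s₁) + s₂ * (g0 f₁ s₂ / s₂) := by gcongr
    _ = g0 f₁ s₁ + g0 f₁ s₂ := by field_simp
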